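/- arXiv:1908.06227 — 3 statements merged into one kernel-verified Lean document; each statement's English description precedes it below -/
import Mathlib

section
/- Any group of orientation-preserving homeomorphisms of ℝ acting freely on ℝ is abelian (Hölder's theorem). -/
namespace HolderAux

variable {G : Type*} [Group G] [MulAction G ℝ]

/-- Sign constancy: a fixed-point-free homeomorphism that is below the identity at `0`
is below the identity everywhere. -/
lemma neg_all (hcont : ∀ g : G, Continuous fun x : ℝ => g • x)
    (hfree : ∀ g : G, g ≠ 1 → ∀ x : ℝ, g • x ≠ x)
    {g : G} (hg : g ≠ 1) (h0 : g • (0:ℝ) < 0) : ∀ x : ℝ, g • x < x := by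
  intro y
  by_contra hy
  push_neg at hy
  have hy' : y < g • y := lt_of_le_of_ne hy (Ne.symm (hfree g hg y))
  have hF : ContinuousOn (fun x : ℝ => g • x - x) (Set.uIcc 0 y) :=
    ((hcont g).sub continuous_id).continuousOn
  have hmem : (0:ℝ) ∈ Set.uIcc ((fun x : ℝ => g • x - x) 0) ((fun x : ℝ => g • x - x) y) := by
    apply Set.mem_uIcc.mpr
    left
    constructor <;> simp <;> linarith
  obtain ⟨x, -, hx⟩ := intermediate_value_uIcc hF hmem
  have : g • x = x := by dsimp at hx; linarith
  exact hfree g hg x this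

/-- Transfer of strict inequalities: if `g • 0 < h • 0` then `g • x < h • x` for all `x`. -/
lemma lt_all (hcont : ∀ g : G, Continuous fun x : ℝ => g • x)
    (hmono : ∀ g : G, StrictMono fun x : ℝ => g • x)
    (hfree : ∀ g : G, g ≠ 1 → ∀ x : ℝ, g • x ≠ x)
    {g h : G} (hgh : g • (0:ℝ) < h • 0) : ∀ x : ℝ, g • x < h • x := by
  set u := h⁻¹ * g with hu
  have hu0 : u • (0:ℝ) < 0 := by
    have := hmono h⁻¹ hgh
    simpa [hu, mul_smul] using this
  have hu1 : u ≠ 1 := by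
    intro h1
    rw [h1] at hu0
    simp at hu0
  have hall := neg_all hcont hfree hu1 hu0
  intro x
  have h2 := hmono h (hall x)
  have h3 : g • x = h • (u • x) := by simp [hu, mul_smul]
  calc g • x = h • (u • x) := h3
    _ < h • x := h2

/-- Transfer of inequalities. -/
lemma le_all (hcont : ∀ g : G, Continuous fun x : ℝ => g • x)
    (hmono : ∀ g : G, StrictMono fun x : ℝ => g • x)
    (hfree : ∀ g : G, g ≠ 1 → ∀ x : ℝ, g • x ≠ x)
    {g h : G} (hgh : g • (0:ℝ) ≤ h • 0) : ∀ x : ℝ, g • x ≤ h • x := by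
  rcases eq_or_lt_of_le hgh with heq | hlt
  · intro x
    have hgh' : g = h := by
      by_contra hne
      have hne' : h⁻¹ * g ≠ 1 := by
        intro h1
        have h2 : h = g := by rwa [inv_mul_eq_one] at h1
        exact hne h2.symm
      have : (h⁻¹ * g) • (0:ℝ) = 0 := by
        rw [mul_smul, heq]; simp
      exact hfree _ hne' 0 this
    rw [hgh']
  · exact fun x => le_of_lt (lt_all hcont hmono hfree hlt x)

/-- Strict monotonicity of integer powers at `0`. -/
lemma zpow_strictMono (hmono : ∀ g : G, StrictMono fun x : ℝ => g • x)
    {f : G} (hf : 0 < f • (0:ℝ)) :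
    StrictMono fun k : ℤ => (f ^ k) • (0:ℝ) := by
  apply strictMono_int_of_lt_succ
  intro k
  have h1 : (f ^ (k+1)) • (0:ℝ) = (f ^ k) • (f • 0) := by
    rw [zpow_add_one, mul_smul]
  rw [h1]
  exact hmono (f ^ k) hf

/-- Archimedean property of the action. -/
lemma arch (hcont : ∀ g : G, Continuous fun x : ℝ => g • x)
    (hmono : ∀ g : G, StrictMono fun x : ℝ => g • x)
    (hfree : ∀ g : G, g ≠ 1 → ∀ x : ℝ, g • x ≠ x)
    {f : G} (hf : 0 < f • (0:ℝ)) (r : ℝ) : ∃ n : ℕ, r < (f ^ n) • (0:ℝ) := by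
  by_contra hn
  push_neg at hn
  set s : ℕ → ℝ := fun n => (f ^ n) • 0 with hs
  have hmonoS : Monotone s := by
    apply monotone_nat_of_le_succ
    intro n
    have h1 : (f ^ (n+1)) • (0:ℝ) = (f ^ n) • (f • 0) := by
      rw [pow_succ, mul_smul]
    simp only [hs, h1]
    exact le_of_lt (hmono (f ^ n) hf)
  have hbdd : BddAbove (Set.range s) := ⟨r, by rintro x ⟨n, rfl⟩; exact hn n⟩
  have hlim : Filter.Tendsto s Filter.atTop (nhds (⨆ n, s n)) :=
    tendsto_atTop_ciSup hmonoS hbdd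
  have hlim' : Filter.Tendsto (fun n => s (n + 1)) Filter.atTop (nhds (⨆ n, s n)) :=
    hlim.comp (Filter.tendsto_add_atTop_nat 1)
  have hstep : ∀ n, s (n + 1) = f • s n := by
    intro n
    simp only [hs, ← mul_smul, pow_succ']
  have hlim'' : Filter.Tendsto (fun n => f • s n) Filter.atTop (nhds (f • (⨆ n, s n))) :=
    ((hcont f).tendsto _).comp hlim
  have heq : f • (⨆ n, s n) = ⨆ n, s n := by
    apply tendsto_nhds_unique hlim''
    simpa [hstep] using hlim'
  have hf1 : f ≠ 1 := by
    intro h1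
    rw [h1] at hf
    simp at hf
  exact hfree f hf1 _ heq

/-- Integer logarithm: bracketing any element between consecutive powers. -/
lemma exists_zpow_interval (hcont : ∀ g : G, Continuous fun x : ℝ => g • x)
    (hmono : ∀ g : G, StrictMono fun x : ℝ => g • x)
    (hfree : ∀ g : G, g ≠ 1 → ∀ x : ℝ, g • x ≠ x)
    {f : G} (hf : 0 < f • (0:ℝ)) (a : G) :
    ∃ m : ℤ, (f ^ m) • (0:ℝ) ≤ a • 0 ∧ a • 0 < (f ^ (m+1)) • (0:ℝ) := by
  classical
  obtain ⟨N, hN⟩ := arch hcont hmono hfree hf (a • 0)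
  obtain ⟨N', hN'⟩ := arch hcont hmono hfree hf (a⁻¹ • 0)
  have hlow : (f ^ (-(N' : ℤ))) • (0:ℝ) ≤ a • 0 := by
    have h1 : ∀ x : ℝ, a⁻¹ • x < (f ^ N') • x :=
      lt_all hcont hmono hfree (by simpa using hN')
    have h2 : (0:ℝ) < (f ^ N') • (a • 0) := by
      have := h1 (a • 0)
      simpa using this
    have h3 : (f ^ (-(N' : ℤ))) • (0:ℝ) < (f ^ (-(N' : ℤ))) • ((f ^ N') • (a • 0)) :=
      hmono (f ^ (-(N' : ℤ))) h2
    have h4 : (f ^ (-(N' : ℤ))) • ((f ^ N') • (a • (0:ℝ))) = a • 0 := by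
      rw [← mul_smul, ← zpow_natCast f N', ← zpow_add]
      simp
    rw [h4] at h3
    exact le_of_lt h3
  set P : ℤ → Prop := fun k => (f ^ k) • (0:ℝ) ≤ a • 0 with hP
  have hSM := zpow_strictMono hmono hf
  have hbdd : ∃ b : ℤ, ∀ z : ℤ, P z → z ≤ b := by
    refine ⟨N, fun z hz => ?_⟩
    by_contra hzN
    push_neg at hzN
    have : (f ^ (N:ℤ)) • (0:ℝ) < (f ^ z) • 0 := hSM hzN
    have h5 : (f ^ (N:ℤ)) • (0:ℝ) = (f ^ N) • (0:ℝ) := by rw [zpow_natCast]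
    rw [h5] at this
    exact absurd hz (by simp only [hP]; linarith)
  obtain ⟨m, hm, hub⟩ := Int.exists_greatest_of_bdd hbdd ⟨-(N' : ℤ), hlow⟩
  refine ⟨m, hm, ?_⟩
  by_contra hcon
  push_neg at hcon
  have := hub (m+1) hcon
  omega

/-- Key inequality: the commutator is smaller than the square of any positive element. -/
lemma key (hcont : ∀ g : G, Continuous fun x : ℝ => g • x)
    (hmono : ∀ g : G, StrictMono fun x : ℝ => g • x)
    (hfree : ∀ g : G, g ≠ 1 → ∀ x : ℝ, g • x ≠ x)
    {f : G} (hf : 0 < f • (0:ℝ)) (a b : G) :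
    ((b*a)⁻¹ * (a*b)) • (0:ℝ) < (f ^ (2:ℤ)) • (0:ℝ) := by
  obtain ⟨m, hm1, hm2⟩ := exists_zpow_interval hcont hmono hfree hf a
  obtain ⟨n, hn1, hn2⟩ := exists_zpow_interval hcont hmono hfree hf b
  -- lower bound for b*a
  have hba_low : (f ^ (m+n)) • (0:ℝ) ≤ (b*a) • 0 := by
    have h2 : b • ((f ^ m) • (0:ℝ)) ≤ b • (a • 0) := (hmono b).monotone hm1
    have h3 : (f ^ n) • ((f ^ m) • (0:ℝ)) ≤ b • ((f ^ m) • 0) :=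
      le_all hcont hmono hfree hn1 _
    have h4 : (f ^ (m+n)) • (0:ℝ) = (f ^ n) • ((f ^ m) • 0) := by
      rw [← mul_smul, ← zpow_add, add_comm]
    rw [h4, mul_smul]
    exact le_trans h3 h2
  -- upper bound for a*b
  have hab_up : (a*b) • (0:ℝ) < (f ^ (m+n+2)) • 0 := by
    have h2 : a • (b • (0:ℝ)) < a • ((f ^ (n+1)) • 0) := hmono a hn2
    have h3 : ∀ x : ℝ, a • x < (f ^ (m+1)) • x := lt_all hcont hmono hfree hm2
    have h4 : (f ^ (m+1)) • ((f ^ (n+1)) • (0:ℝ)) = (f ^ (m+n+2)) • 0 := by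
      rw [← mul_smul, ← zpow_add]
      ring_nf
    rw [mul_smul]
    calc a • (b • (0:ℝ)) < a • ((f ^ (n+1)) • 0) := h2
      _ < (f ^ (m+1)) • ((f ^ (n+1)) • 0) := h3 _
      _ = (f ^ (m+n+2)) • 0 := h4
  -- conclude
  have hstep1 : ((b*a)⁻¹ * (a*b)) • (0:ℝ) < (b*a)⁻¹ • ((f ^ (m+n+2)) • (0:ℝ)) := by
    rw [mul_smul]
    exact hmono (b*a)⁻¹ hab_up
  have hstep2 : (b*a)⁻¹ • ((f ^ (m+n+2)) • (0:ℝ)) ≤ (f ^ (2:ℤ)) • (0:ℝ) := by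
    set y : ℝ := (f ^ (m+n+2)) • (0:ℝ) with hy
    have h5 : (f ^ (m+n)) • ((b*a)⁻¹ • y) ≤ y := by
      have h5' := le_all hcont hmono hfree hba_low ((b*a)⁻¹ • y)
      rwa [smul_inv_smul] at h5'
    have h6 := (hmono (f ^ (m+n))⁻¹).monotone h5
    have h7 : (f ^ (m+n))⁻¹ • ((f ^ (m+n)) • ((b*a)⁻¹ • y)) = (b*a)⁻¹ • y := by
      simp
    rw [h7] at h6
    have h8 : (f ^ (m+n))⁻¹ • y = (f ^ (2:ℤ)) • (0:ℝ) := by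
      rw [hy, ← zpow_neg, ← mul_smul, ← zpow_add]
      have he2 : -(m+n) + (m+n+2) = (2:ℤ) := by ring
      rw [he2]
    rwa [h8] at h6
  exact lt_of_lt_of_le hstep1 hstep2

/-- The commutator is never positive. -/
lemma not_pos_comm (hcont : ∀ g : G, Continuous fun x : ℝ => g • x)
    (hmono : ∀ g : G, StrictMono fun x : ℝ => g • x)
    (hfree : ∀ g : G, g ≠ 1 → ∀ x : ℝ, g • x ≠ x) :
    ∀ a b : G, ¬ (0 < ((b*a)⁻¹ * (a*b)) • (0:ℝ)) := by
  intro a b hc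
  set c := (b*a)⁻¹ * (a*b) with hcdef
  by_cases hd : ∃ d : G, 0 < d • (0:ℝ) ∧ d • (0:ℝ) < c • (0:ℝ)
  · -- no least positive element below c; find δ with δ² ≤ c
    obtain ⟨d, hd1, hd2⟩ := hd
    set e := d⁻¹ * c with he
    have he1 : 0 < e • (0:ℝ) := by
      have := hmono d⁻¹ hd2
      simpa [he, mul_smul] using this
    obtain ⟨δ, hδpos, hδd, hδe⟩ :
        ∃ δ : G, 0 < δ • (0:ℝ) ∧ δ • (0:ℝ) ≤ d • 0 ∧ δ • (0:ℝ) ≤ e • 0 := by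
      rcases le_total (d • (0:ℝ)) (e • 0) with h | h
      · exact ⟨d, hd1, le_refl _, h⟩
      · exact ⟨e, he1, h, le_refl _⟩
    have hkey := key hcont hmono hfree hδpos a b
    have hsq : (δ ^ (2:ℤ)) • (0:ℝ) = (δ * δ) • 0 := by
      have : (δ : G) ^ (2:ℤ) = δ * δ := by
        rw [show (2:ℤ) = 1 + 1 by norm_num, zpow_add, zpow_one]
      rw [this]
    have hle : (δ * δ) • (0:ℝ) ≤ c • 0 := by
      have h1 : δ • (δ • (0:ℝ)) ≤ δ • (e • 0) := (hmono δ).monotone hδe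
      have h2 : δ • (e • (0:ℝ)) ≤ d • (e • 0) := le_all hcont hmono hfree hδd _
      have h3 : d • (e • (0:ℝ)) = c • 0 := by
        rw [← mul_smul, he, mul_inv_cancel_left]
      rw [mul_smul]
      linarith
    rw [hsq] at hkey
    rw [← hcdef] at hkey
    linarith
  · -- c is a least positive element: G is cyclic generated by c
    push_neg at hd
    have hcyc : ∀ g : G, ∃ k : ℤ, g = c ^ k := by
      intro g
      obtain ⟨m, h1, h2⟩ := exists_zpow_interval hcont hmono hfree hc g
      set u := (c ^ m)⁻¹ * g with hu
      have hu0 : (0:ℝ) ≤ u • 0 := by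
        have := (hmono (c ^ m)⁻¹).monotone h1
        simpa [hu, mul_smul] using this
      have hu1 : u • (0:ℝ) < c • 0 := by
        have h3 : (c ^ m)⁻¹ • (g • (0:ℝ)) < (c ^ m)⁻¹ • ((c ^ (m+1)) • 0) :=
          hmono (c ^ m)⁻¹ h2
        have h4 : (c ^ m)⁻¹ • ((c ^ (m+1)) • (0:ℝ)) = c • 0 := by
          rw [← zpow_neg, ← mul_smul, ← zpow_add]
          have he2 : -m + (m+1) = (1:ℤ) := by ring
          rw [he2, zpow_one]
        rw [h4] at h3
        simpa [hu, mul_smul] using h3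
      have hu2 : u = 1 := by
        by_contra hne
        have hne' : u • (0:ℝ) ≠ 0 := hfree u hne 0
        have hpos : 0 < u • (0:ℝ) := lt_of_le_of_ne hu0 (Ne.symm hne')
        exact absurd hu1 (not_lt.mpr (hd u hpos))
      refine ⟨m, ?_⟩
      have := hu2
      rw [hu, inv_mul_eq_one] at this
      exact this.symm
    obtain ⟨i, hi⟩ := hcyc a
    obtain ⟨j, hj⟩ := hcyc b
    have hcomm : b * a = a * b := by
      rw [hi, hj, ← zpow_add, ← zpow_add, add_comm]
    have hc1 : c = 1 := by
      rw [hcdef, hcomm, inv_mul_cancel]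
    rw [hc1] at hc
    simp at hc

end HolderAux

/-- Hölder's theorem: a group acting freely on `ℝ` by orientation-preserving
homeomorphisms is abelian.  In particular the subgroup generated by two commuting
freely-acting orientation-preserving homeomorphisms is abelian. -/
theorem stmt_1 (G : Type*) [Group G] [MulAction G ℝ]
    (hcont : ∀ g : G, Continuous fun x : ℝ => g • x)
    (hmono : ∀ g : G, StrictMono fun x : ℝ => g • x)
    (hfree : ∀ g : G, g ≠ 1 → ∀ x : ℝ, g • x ≠ x) :
    ∀ a b : G, a * b = b * a := by
  intro a b
  have h1 := HolderAux.not_pos_comm hcont hmono hfree a b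
  have h2 := HolderAux.not_pos_comm hcont hmono hfree b a
  set c := (b*a)⁻¹ * (a*b) with hcdef
  have hc' : ((a*b)⁻¹ * (b*a)) = c⁻¹ := by
    rw [hcdef]
    simp [mul_inv_rev]
  rw [hc'] at h2
  have hc0 : c • (0:ℝ) = 0 := by
    rcases lt_trichotomy (c • (0:ℝ)) 0 with h | h | h
    · exfalso
      have := HolderAux.lt_all hcont hmono hfree (g := c) (h := 1) (by simpa using h)
      have h3 : 0 < c⁻¹ • (0:ℝ) := by
        have h4 := hmono c⁻¹ h
        simpa using h4
      exact h2 h3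
    · exact h
    · exact absurd h h1
  have hc1 : c = 1 := by
    by_contra hne
    exact hfree c hne 0 hc0
  have := hc1
  rw [hcdef, inv_mul_eq_one] at this
  exact this.symm
end

section
/- Let G be a group acting freely by orientation-preserving homeomorphisms on ℝ. Then G admits an Archimedean left-invariant linear order, and hence G embeds in (ℝ, +) as an ordered group; in particular G is torsion-free and abelian. -/
/-!
Pulling back the order of `ℝ` along the orbit map `g ↦ g • 0` (injective by freeness) gives a
left-invariant linear order on `G`. It is also right-invariant: if `a • 0 < b • 0` then
`a⁻¹ b` moves `0` to the right and, having no fixed point, moves every point to the right by the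
intermediate value theorem, so `a • x < b • x` for all `x`. It is Archimedean because the orbit of
a point under a fixed-point-free homeomorphism cannot converge (its limit would be fixed).

By Hölder's theorem a bi-ordered Archimedean group is abelian: the commutator
`c = (b a)⁻¹ (a b)` satisfies `c < δ²` for every `δ > 1` (compare `a` and `b` with powers of `δ`),
while if `c > 1` either some `δ > 1` has `δ² ≤ c`, or `c` is the least element above `1` and then
`G` is cyclic. An Archimedean linearly ordered abelian group embeds into `ℝ`.
-/

open Filter Function

section RealDynamics

variable {f : ℝ → ℝ}

theorem forall_lt_self_of_continuous (hf : Continuous f) (hfix : ∀ x, f x ≠ x) {x₀ : ℝ}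
    (h₀ : x₀ < f x₀) (x : ℝ) : x < f x := by
  by_contra! hx
  obtain ⟨c, hc⟩ := intermediate_value_univ x x₀ (hf.sub continuous_id)
    ⟨sub_nonpos.mpr hx, sub_nonneg.mpr h₀.le⟩
  exact hfix c (sub_eq_zero.mp hc)

theorem tendsto_iterate_atTop_of_lt_self (hf : Continuous f) (hlt : ∀ x, x < f x) (x : ℝ) :
    Tendsto (fun n => f^[n] x) atTop atTop := by
  have hmono : Monotone fun n => f^[n] x :=
    monotone_nat_of_le_succ fun n => by rw [iterate_succ_apply']; exact (hlt _).le
  refine (tendsto_atTop_of_monotone hmono).resolve_right ?_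
  rintro ⟨L, hL⟩
  exact (hlt L).ne' (isFixedPt_of_tendsto_iterate hL hf.continuousAt)

end RealDynamics

section FreeAction

variable {G : Type*} [Group G] [MulAction G ℝ]

theorem injective_smul_zero (hfree : ∀ g : G, g ≠ 1 → ∀ x : ℝ, g • x ≠ x) :
    Injective fun g : G => g • (0 : ℝ) := by
  intro a b hab
  by_contra hne
  exact hfree (b⁻¹ * a) (by rwa [Ne, inv_mul_eq_one, eq_comm]) 0
    (by simp only [mul_smul, hab, inv_smul_smul])

theorem smul_lt_smul_of_smul_zero_lt (hcont : ∀ g : G, Continuous fun x : ℝ => g • x)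
    (hmono : ∀ g : G, StrictMono fun x : ℝ => g • x)
    (hfree : ∀ g : G, g ≠ 1 → ∀ x : ℝ, g • x ≠ x) {a b : G} (hab : a • (0 : ℝ) < b • 0)
    (x : ℝ) : a • x < b • x := by
  have hne : a⁻¹ * b ≠ 1 := fun h => hab.ne (by rw [inv_mul_eq_one.mp h])
  have h₀ : (0 : ℝ) < (a⁻¹ * b) • 0 := by simpa [mul_smul] using hmono a⁻¹ hab
  have := hmono a (forall_lt_self_of_continuous (hcont _) (hfree _ hne) h₀ x)
  simpa [mul_smul] using this

theorem exists_lt_pow_smul (hcont : ∀ g : G, Continuous fun x : ℝ => g • x)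
    (hfree : ∀ g : G, g ≠ 1 → ∀ x : ℝ, g • x ≠ x) {g : G} (hg : (0 : ℝ) < g • 0) (x b : ℝ) :
    ∃ n : ℕ, b < g ^ n • x := by
  have hg1 : g ≠ 1 := by rintro rfl; simp at hg
  have := tendsto_iterate_atTop_of_lt_self (hcont g)
    (forall_lt_self_of_continuous (hcont g) (hfree g hg1) hg) x
  simp only [smul_iterate] at this
  exact (this.eventually_gt_atTop b).exists

end FreeAction

section BiorderedGroup

variable {G : Type*} [Group G] [LinearOrder G] [MulLeftMono G]

theorem strictMono_zpow_of_one_lt {δ : G} (hδ : 1 < δ) : StrictMono fun n : ℤ => δ ^ n := by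
  intro m n hmn
  have : δ ^ n = δ ^ m * δ ^ (n - m) := by rw [← zpow_add, add_sub_cancel]
  simp only [this]
  exact lt_mul_of_one_lt_right' _ (one_lt_zpow hδ (sub_pos.mpr hmn))

theorem exists_lt_zpow_of_ne_one (harch : ∀ a b : G, 1 < a → ∃ n : ℕ, b < a ^ n) {g : G}
    (hg : g ≠ 1) (h : G) : ∃ n : ℤ, h < g ^ n := by
  rcases hg.lt_or_gt with hg | hg
  · obtain ⟨n, hn⟩ := harch g⁻¹ h (one_lt_inv'.mpr hg)
    exact ⟨-n, by rwa [zpow_neg, zpow_natCast, ← inv_pow]⟩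
  · obtain ⟨n, hn⟩ := harch g h hg
    exact ⟨n, by rwa [zpow_natCast]⟩

variable [MulRightMono G]

theorem exists_zpow_le_lt_zpow_add_one (harch : ∀ a b : G, 1 < a → ∃ n : ℕ, b < a ^ n)
    {δ : G} (hδ : 1 < δ) (g : G) : ∃ m : ℤ, δ ^ m ≤ g ∧ g < δ ^ (m + 1) := by
  obtain ⟨n, hn⟩ := harch δ g hδ
  obtain ⟨k, hk⟩ := harch δ g⁻¹ hδ
  have hbdd (m : ℤ) (hm : δ ^ m ≤ g) : m ≤ n :=
    ((strictMono_zpow_of_one_lt hδ).lt_iff_lt.mp (hm.trans_lt (by simpa using hn))).le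
  have hlow : δ ^ (-k : ℤ) ≤ g := by
    rw [zpow_neg, zpow_natCast]
    exact (inv_lt'.mp hk).le
  obtain ⟨m, hm, hmax⟩ := Int.exists_greatest_of_bdd ⟨n, hbdd⟩ ⟨_, hlow⟩
  exact ⟨m, hm, lt_of_not_ge fun h => by linarith [hmax _ h]⟩

theorem commute_of_isLeast_one_lt (harch : ∀ a b : G, 1 < a → ∃ n : ℕ, b < a ^ n) {c : G}
    (hc : IsLeast {d : G | 1 < d} c) (a b : G) : Commute a b := by
  have hcyc (g : G) : ∃ m : ℤ, c ^ m = g := by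
    obtain ⟨m, hle, hlt⟩ := exists_zpow_le_lt_zpow_add_one harch hc.1 g
    refine ⟨m, inv_mul_eq_one.mp (eq_of_le_of_not_lt ?_ fun h => ?_).symm⟩
    · exact le_inv_mul_iff_mul_le.mpr (by simpa using hle)
    · exact (hc.2 h).not_gt (inv_mul_lt_iff_lt_mul.mpr (by rwa [← zpow_add_one]))
  obtain ⟨m, rfl⟩ := hcyc a
  obtain ⟨n, rfl⟩ := hcyc b
  exact Commute.zpow_zpow_self c m n

theorem exists_one_lt_sq_le {c d : G} (hd : 1 < d) (hdc : d < c) :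
    ∃ δ : G, 1 < δ ∧ δ ^ 2 ≤ c := by
  by_cases hsq : d ^ 2 ≤ c
  · exact ⟨d, hd, hsq⟩
  · rw [not_le, sq] at hsq
    have hδd : c * d⁻¹ < d := mul_inv_lt_iff_lt_mul.mpr hsq
    refine ⟨c * d⁻¹, lt_mul_inv_iff_lt.mpr hdc, ?_⟩
    calc (c * d⁻¹) ^ 2 = c * d⁻¹ * (c * d⁻¹) := sq _
      _ ≤ c * d⁻¹ * d := mul_le_mul_right hδd.le _
      _ = c := inv_mul_cancel_right c d

theorem mul_lt_mul_swap_mul_sq (harch : ∀ a b : G, 1 < a → ∃ n : ℕ, b < a ^ n) (a b : G) {δ : G}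
    (hδ : 1 < δ) : a * b < b * a * δ ^ 2 := by
  obtain ⟨m, ham, ham'⟩ := exists_zpow_le_lt_zpow_add_one harch hδ a
  obtain ⟨n, hbn, hbn'⟩ := exists_zpow_le_lt_zpow_add_one harch hδ b
  calc a * b < δ ^ (m + 1) * δ ^ (n + 1) := mul_lt_mul_of_lt_of_lt ham' hbn'
    _ = δ ^ n * δ ^ m * δ ^ 2 := by group
    _ ≤ b * a * δ ^ 2 := mul_le_mul_left (mul_le_mul' hbn ham) _

theorem mul_le_mul_swap (harch : ∀ a b : G, 1 < a → ∃ n : ℕ, b < a ^ n) (a b : G) :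
    a * b ≤ b * a := by
  by_contra! h
  set c := (b * a)⁻¹ * (a * b) with hc_def
  have hc : 1 < c := lt_inv_mul_iff_lt.mpr h
  obtain ⟨δ, hδ, hδc⟩ : ∃ δ : G, 1 < δ ∧ δ ^ 2 ≤ c := by
    by_cases hgap : ∃ d : G, 1 < d ∧ d < c
    · obtain ⟨d, hd, hdc⟩ := hgap
      exact exists_one_lt_sq_le hd hdc
    · have hleast : IsLeast {d : G | 1 < d} c :=
        ⟨hc, fun d hd => not_lt.mp fun hdc => hgap ⟨d, hd, hdc⟩⟩
      exact absurd (commute_of_isLeast_one_lt harch hleast a b).eq h.ne'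
  have := (mul_lt_mul_swap_mul_sq harch a b hδ).trans_le (mul_le_mul_right hδc _)
  rw [hc_def, mul_inv_cancel_left] at this
  exact this.false

theorem mul_comm_of_archimedean (harch : ∀ a b : G, 1 < a → ∃ n : ℕ, b < a ^ n) (a b : G) :
    a * b = b * a :=
  (mul_le_mul_swap harch a b).antisymm (mul_le_mul_swap harch b a)

theorem exists_injective_monoidHom_real (harch : ∀ a b : G, 1 < a → ∃ n : ℕ, b < a ^ n) :
    ∃ φ : G →* Multiplicative ℝ, Injective φ := by
  let _ : CommGroup G := { ‹Group G› with mul_comm := mul_comm_of_archimedean harch }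
  have : IsOrderedMonoid G :=
    ⟨fun a b h c => mul_le_mul_left h c, fun a b h c => mul_le_mul_right h c⟩
  have : MulArchimedean G := ⟨fun x y hy => (harch y x hy).imp fun _ => le_of_lt⟩
  obtain ⟨f, hf⟩ := Archimedean.exists_orderAddMonoidHom_real_injective (Additive G)
  exact ⟨AddMonoidHom.toMultiplicativeRight f.toAddMonoidHom, hf⟩

end BiorderedGroup

/-- A group acting freely by orientation-preserving homeomorphisms on `ℝ` admits an
Archimedean left-invariant linear order, embeds in `(ℝ, +)`, and is torsion-free
and abelian. -/
theorem stmt_2 (G : Type*) [Group G] [MulAction G ℝ]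
    (hcont : ∀ g : G, Continuous fun x : ℝ => g • x)
    (hmono : ∀ g : G, StrictMono fun x : ℝ => g • x)
    (hfree : ∀ g : G, g ≠ 1 → ∀ x : ℝ, g • x ≠ x) :
    (∃ lt : G → G → Prop,
        (∀ a b : G, lt a b ∨ a = b ∨ lt b a) ∧
        (∀ a b : G, lt a b → ¬ lt b a) ∧
        (∀ a b c : G, lt a b → lt b c → lt a c) ∧
        (∀ a b c : G, lt b c → lt (a * b) (a * c)) ∧
        (∀ g h : G, g ≠ 1 → ∃ n : ℤ, lt h (g ^ n))) ∧
    (∃ φ : G →* Multiplicative ℝ, Function.Injective φ) ∧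
    (∀ g : G, ∀ n : ℕ, 0 < n → g ^ n = 1 → g = 1) ∧
    (∀ a b : G, a * b = b * a) := by
  let _ : LinearOrder G := LinearOrder.lift' (fun g : G => g • (0 : ℝ)) (injective_smul_zero hfree)
  have hle (a b : G) : a ≤ b ↔ a • (0 : ℝ) ≤ b • 0 := Iff.rfl
  have hlt (a b : G) : a < b ↔ a • (0 : ℝ) < b • 0 := Iff.rfl
  have : MulLeftMono G := ⟨fun c a b h => by
    simpa only [hle, mul_smul] using (hmono c).monotone ((hle a b).mp h)⟩
  have : MulRightMono G := ⟨fun c a b h => by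
    rcases h.lt_or_eq with h | rfl
    · simpa only [hle, mul_smul] using
        (smul_lt_smul_of_smul_zero_lt hcont hmono hfree h (c • 0)).le
    · rfl⟩
  have harch (a b : G) (ha : 1 < a) : ∃ n : ℕ, b < a ^ n := by
    rw [hlt, one_smul] at ha
    simpa only [hlt] using exists_lt_pow_smul hcont hfree ha 0 (b • 0)
  obtain ⟨φ, hφ⟩ := exists_injective_monoidHom_real harch
  refine ⟨⟨(· < ·), lt_trichotomy, fun _ _ => lt_asymm, fun _ _ _ => lt_trans,
    fun a _ _ h => mul_lt_mul_right h a, fun g h hg => exists_lt_zpow_of_ne_one harch hg h⟩,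
    ⟨φ, hφ⟩, fun g n hn hg => (pow_eq_one_iff.mp hg).resolve_right hn.ne',
    mul_comm_of_archimedean harch⟩
end

section
/- Let f : ℝ → ℝ be an orientation-preserving homeomorphism with f(x₀) > x₀ for some x₀. Let U = ⋃_{n ∈ ℤ} fⁿ([x₀, f(x₀)]). Then U is an open interval invariant under f, f acts freely on U, and every point of the frontier of U in ℝ is a fixed point of f. -/
/-!
With `aₙ = fⁿ x₀`, the pieces `fⁿ '' [x₀, f x₀] = [aₙ, aₙ₊₁]` form a chain of consecutive
intervals along the strictly increasing sequence `aₙ`, so their union `U` is connected, and every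
point of `U` lies in the open interval `(aₙ₋₁, aₙ₊₂) ⊆ U`. Since `f` shifts the pieces, `f '' U = U`.
A fixed point of `f` in `U` is fixed by every `fⁿ`, hence lies in `[x₀, f x₀]`, which forces `f x₀`
to be fixed. A frontier point of the open interval `U` is its supremum or infimum, and these are
preserved by the order isomorphism `f`, which preserves `U`.
-/

open Set

namespace Equiv.Perm

variable {α : Type*}

def zpowOrbit (e : Perm α) (S : Set α) : Set α := ⋃ n : ℤ, ⇑(e ^ n) '' S

theorem image_zpowOrbit (e : Perm α) (S : Set α) : e '' zpowOrbit e S = zpowOrbit e S := by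
  simp only [zpowOrbit, image_iUnion, image_image, ← mul_apply, ← zpow_one_add]
  exact (Equiv.addLeft (1 : ℤ)).surjective.iUnion_comp fun n => ⇑(e ^ n) '' S

theorem mem_of_isFixedPt_of_mem_zpowOrbit {e : Perm α} {S : Set α} {x : α}
    (hfix : Function.IsFixedPt e x) (hx : x ∈ zpowOrbit e S) : x ∈ S := by
  obtain ⟨n, y, hy, hyx⟩ := mem_iUnion.1 hx
  rwa [← (e ^ n).injective (hyx.trans (hfix.perm_zpow n).symm)]

section LinearOrder

variable [LinearOrder α] {e : Perm α}

theorem strictMono_zpow (he : StrictMono e) (n : ℤ) : StrictMono ⇑(e ^ n) := by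
  have he_inv : StrictMono ⇑e⁻¹ := fun a b hab => he.lt_iff_lt.1 (by simpa using hab)
  induction n using Int.induction_on with
  | zero => exact strictMono_id
  | succ n ih => rw [zpow_add_one, coe_mul]; exact ih.comp he
  | pred n ih => rw [zpow_sub_one, coe_mul]; exact ih.comp he_inv

theorem zpow_image_Icc (he : StrictMono e) (n : ℤ) (x : α) :
    ⇑(e ^ n) '' Icc x (e x) = Icc ((e ^ n) x) ((e ^ (n + 1)) x) := by
  rw [zpow_add_one, mul_apply]
  exact ((strictMono_zpow he n).orderIsoOfSurjective _ (e ^ n).surjective).image_Icc x (e x)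

theorem apply_ne_self_of_mem_zpowOrbit_Icc (he : StrictMono e) {x y : α} (hx : x < e x)
    (hy : y ∈ zpowOrbit e (Icc x (e x))) : e y ≠ y := by
  intro hfix
  obtain ⟨hxy, hye⟩ := mem_of_isFixedPt_of_mem_zpowOrbit hfix hy
  have hy_eq : y = e x := le_antisymm hye (hfix ▸ he.monotone hxy)
  exact hx.ne' (e.injective (hy_eq ▸ hfix))

theorem isOpen_zpowOrbit_Icc [TopologicalSpace α] [OrderTopology α] (he : StrictMono e) {x : α}
    (hx : x < e x) (hU : (zpowOrbit e (Icc x (e x))).OrdConnected) :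
    IsOpen (zpowOrbit e (Icc x (e x))) := by
  have ha : StrictMono fun n : ℤ => (e ^ n) x := strictMono_int_of_lt_succ fun n => by
    rw [zpow_add_one, mul_apply]
    exact strictMono_zpow he n hx
  have ha_mem (n : ℤ) : (e ^ n) x ∈ zpowOrbit e (Icc x (e x)) :=
    mem_iUnion.2 ⟨n, x, left_mem_Icc.2 hx.le, rfl⟩
  refine isOpen_iff_mem_nhds.2 fun y hy => ?_
  obtain ⟨n, hyn⟩ := mem_iUnion.1 hy
  rw [zpow_image_Icc he] at hyn
  have hy_Ioo : y ∈ Ioo ((e ^ (n - 1)) x) ((e ^ (n + 2)) x) :=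
    ⟨(ha (sub_one_lt n)).trans_le hyn.1, hyn.2.trans_lt (ha (by omega))⟩
  exact Filter.mem_of_superset (Ioo_mem_nhds hy_Ioo.1 hy_Ioo.2)
    (Ioo_subset_Icc_self.trans (hU.out (ha_mem _) (ha_mem _)))

end LinearOrder

theorem ordConnected_zpowOrbit_Icc [ConditionallyCompleteLinearOrder α] [TopologicalSpace α]
    [OrderTopology α] [DenselyOrdered α] {e : Perm α} (he : StrictMono e) {x : α}
    (hx : x ≤ e x) : (zpowOrbit e (Icc x (e x))).OrdConnected := by
  refine (IsPreconnected.iUnion_of_chain (fun n => ?_) fun n => ?_).ordConnected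
  · rw [zpow_image_Icc he]
    exact isPreconnected_Icc
  · have hstep (n : ℤ) : (e ^ n) x ≤ (e ^ (n + 1)) x := by
      rw [zpow_add_one, mul_apply]
      exact (strictMono_zpow he n).monotone hx
    rw [Order.succ_eq_add_one, zpow_image_Icc he, zpow_image_Icc he]
    exact ⟨(e ^ (n + 1)) x, ⟨hstep n, le_rfl⟩, ⟨le_rfl, hstep (n + 1)⟩⟩

end Equiv.Perm

theorem Set.OrdConnected.isLUB_or_isGLB_of_mem_closure {α : Type*} [LinearOrder α]
    [TopologicalSpace α] [OrderTopology α] {U : Set α} (hU : U.OrdConnected) {x : α}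
    (hxc : x ∈ closure U) (hxU : x ∉ U) : IsLUB U x ∨ IsGLB U x := by
  by_cases hub : x ∈ upperBounds U
  · exact .inl (isLUB_of_mem_closure hub hxc)
  · refine .inr (isGLB_of_mem_closure (fun u hu => ?_) hxc)
    obtain ⟨v, hv, hxv⟩ := not_forall₂.1 hub
    by_contra! hux
    exact hxU (hU.out hu hv ⟨hux.le, (not_le.1 hxv).le⟩)

theorem OrderIso.apply_eq_self_of_mem_frontier {α : Type*} [LinearOrder α] [TopologicalSpace α]
    [OrderTopology α] (φ : α ≃o α) {U : Set α} (hU : U.OrdConnected) (hUo : IsOpen U)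
    (hφU : φ '' U = U) {x : α} (hx : x ∈ frontier U) : φ x = x := by
  rw [hUo.frontier_eq] at hx
  rcases hU.isLUB_or_isGLB_of_mem_closure hx.1 hx.2 with h | h
  · exact (hφU ▸ φ.isLUB_image'.2 h).unique h
  · exact (hφU ▸ φ.isGLB_image'.2 h).unique h

open Equiv.Perm

theorem stmt_5_general (f : ℝ → ℝ) (hb : Function.Bijective f)
    (hm : StrictMono f) (x₀ : ℝ) (hx₀ : f x₀ > x₀) :
    ∀ U : Set ℝ,
      U = (⋃ n : ℤ, ⇑((Equiv.ofBijective f hb) ^ n) '' Set.Icc x₀ (f x₀)) →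
      IsOpen U ∧ U.OrdConnected ∧ f '' U = U ∧ (∀ x ∈ U, f x ≠ x) ∧
        ∀ x ∈ frontier U, f x = x := by
  rintro U rfl
  set e := Equiv.ofBijective f hb
  have he : StrictMono e := hm
  have hconn := ordConnected_zpowOrbit_Icc he hx₀.le
  have hinv : e '' zpowOrbit e (Icc x₀ (e x₀)) = zpowOrbit e (Icc x₀ (e x₀)) :=
    image_zpowOrbit e _
  have hopen := isOpen_zpowOrbit_Icc he hx₀ hconn
  exact ⟨hopen, hconn, hinv,
    fun y hy => apply_ne_self_of_mem_zpowOrbit_Icc he hx₀ hy,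
    fun y hy => (hm.orderIsoOfSurjective f hb.2).apply_eq_self_of_mem_frontier hconn hopen hinv hy⟩

/-- If an orientation-preserving homeomorphism `f` of `ℝ` satisfies `f x₀ > x₀`,
then `U = ⋃_{n ∈ ℤ} fⁿ([x₀, f x₀])` is an open interval, invariant under `f`,
on which `f` acts freely, and every frontier point of `U` is fixed by `f`. -/
theorem stmt_5 (f : ℝ → ℝ) (hc : Continuous f) (hb : Function.Bijective f)
    (hm : StrictMono f) (x₀ : ℝ) (hx₀ : f x₀ > x₀) :
    ∀ U : Set ℝ,
      U = (⋃ n : ℤ, ⇑((Equiv.ofBijective f hb) ^ n) '' Set.Icc x₀ (f x₀)) →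
      IsOpen U ∧ U.OrdConnected ∧ f '' U = U ∧ (∀ x ∈ U, f x ≠ x) ∧
        ∀ x ∈ frontier U, f x = x :=
  stmt_5_general f hb hm x₀ hx₀
end
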